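/- A partition π is a basis partition if and only if no part of π_r equals a part of π_b, i.e., no column length of the Ferrers graph of π strictly to the right of the Durfee square equals a row length strictly below the Durfee square. -/

import Mathlib

open Finset
open scoped Classical

namespace BasisPartitions

/-! ### Ordinary partitions -/

/-- The parts of a partition, listed in weakly decreasing order. -/
def sparts {n : ℕ} (π : n.Partition) : List ℕ := π.parts.sort (· ≥ ·)

/-- `conj L j` is the number of parts that are `≥ j`, i.e. the `j`-th part of the
conjugate partition (for `j ≥ 1`). -/
def conj (L : List ℕ) (j : ℕ) : ℕ := L.countP (fun b => j ≤ b)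

/-- The Durfee square size: the largest `k` such that the `k`-th part is `≥ k`. -/
def durfee (L : List ℕ) : ℕ := (List.range L.length).countP (fun i => i + 1 ≤ L.getD i 0)

/-- The `(i+1)`-st successive rank `r_{i+1} = b_{i+1} - c_{i+1}` (0-indexed `i`). -/
def rank (L : List ℕ) (i : ℕ) : ℤ := (L.getD i 0 : ℤ) - (conj L (i + 1) : ℤ)

/-- The successive rank vector `(r_1, ..., r_k)` where `k` is the Durfee square size. -/
def ranks (L : List ℕ) : List ℤ := (List.range (durfee L)).map (rank L)

/-- A basis partition: the partitioned number is minimal among all partitions having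
the same successive rank vector. -/
def IsBasis {n : ℕ} (π : n.Partition) : Prop :=
  ∀ (m : ℕ) (π' : m.Partition), ranks (sparts π') = ranks (sparts π) → n ≤ m

/-- The signature: the number of distinct part sizes below the Durfee square. -/
def sig (L : List ℕ) : ℕ := ((L.drop (durfee L)).dedup).length

/-- `b(n;k)`: the number of basis partitions of `n` with Durfee square size `k`. -/
noncomputable def bCount (n k : ℕ) : ℕ :=
  Nat.card {π : n.Partition // IsBasis π ∧ durfee (sparts π) = k}

/-- `b(n,k,s)`: the number of basis partitions of `n` with Durfee square size `k`
and signature `s`. -/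
noncomputable def bCount3 (n k s : ℕ) : ℕ :=
  Nat.card {π : n.Partition // IsBasis π ∧ durfee (sparts π) = k ∧ sig (sparts π) = s}

/-- `B(n;j)`: the number of basis partitions of `n` with signature `j`. -/
noncomputable def BCount (n j : ℕ) : ℕ :=
  Nat.card {π : n.Partition // IsBasis π ∧ sig (sparts π) = j}

/-- Rogers–Ramanujan condition: exactly `k` parts, consecutive gaps `≥ 2`, last part `≥ 1`. -/
def RR (L : List ℕ) (k : ℕ) : Prop :=
  L.length = k ∧ (∀ i, i + 1 < k → L.getD (i + 1) 0 + 2 ≤ L.getD i 0) ∧ 1 ≤ L.getD (k - 1) 0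

/-- `t(π)` for a Rogers–Ramanujan partition: the number of gaps `> 2`, plus 1 if the
last part is `> 1`. -/
def tRR (L : List ℕ) (k : ℕ) : ℕ :=
  ((Finset.range (k - 1)).filter (fun i => L.getD (i + 1) 0 + 2 < L.getD i 0)).card +
    (if 1 < L.getD (k - 1) 0 then 1 else 0)

/-- Primary condition: exactly `k` parts, each part `≥ k`. -/
def Primary (L : List ℕ) (k : ℕ) : Prop := L.length = k ∧ ∀ x ∈ L, k ≤ x

/-- `t(π)` for a primary partition: the number of strict descents, plus 1 if the
last part is `> k`. -/
def tP (L : List ℕ) (k : ℕ) : ℕ :=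
  ((Finset.range (k - 1)).filter (fun i => L.getD (i + 1) 0 < L.getD i 0)).card +
    (if k < L.getD (k - 1) 0 then 1 else 0)

/-- A complete basis partition: every `j` with `1 ≤ j ≤ k-1` occurs as a part of `π_b`
(a row below the Durfee square) or as a part of `π_r` (a column length strictly to the
right of the Durfee square). -/
def IsComplete {n : ℕ} (π : n.Partition) : Prop :=
  ∀ j : ℕ, 1 ≤ j → j < durfee (sparts π) →
    j ∈ (sparts π).drop (durfee (sparts π)) ∨
      ∃ c : ℕ, durfee (sparts π) < c ∧ conj (sparts π) c = j

/-- `b_c(n)`: the number of complete basis partitions of `n`. -/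
noncomputable def bc (n : ℕ) : ℕ := Nat.card {π : n.Partition // IsBasis π ∧ IsComplete π}

/-! ### Partitions with non-repeating odd parts and their 2-modular graphs -/

/-- Partitions with non-repeating (distinct) odd parts. -/
def Pod {n : ℕ} (π : n.Partition) : Prop := ∀ x, Odd x → π.parts.count x ≤ 1

/-- The size (sum of entries) of the `c`-th column (1-indexed) of the 2-modular graph. -/
def mcolSize (L : List ℕ) (c : ℕ) : ℕ :=
  (L.map (fun x => if 2 * c ≤ x then 2 else if x = 2 * c - 1 then 1 else 0)).sum

/-- The length (number of entries) of the `c`-th column (1-indexed) of the 2-modular graph. -/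
def mcolLen (L : List ℕ) (c : ℕ) : ℕ := L.countP (fun x => 2 * c - 1 ≤ x)

/-- The number of entries in a row of the 2-modular graph recording the part `x`,
namely `⌈x/2⌉`. -/
def mrowLen (x : ℕ) : ℕ := (x + 1) / 2

/-- The 2-modular Durfee square size: the largest `k` with `⌈b_k/2⌉ ≥ k`. -/
def mdurfee (L : List ℕ) : ℕ := (List.range L.length).countP (fun i => 2 * i + 1 ≤ L.getD i 0)

/-- The `(i+1)`-st 2-modular successive rank: (size of row `i+1`) − (size of column `i+1`). -/
def mrank (L : List ℕ) (i : ℕ) : ℤ := (L.getD i 0 : ℤ) - (mcolSize L (i + 1) : ℤ)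

/-- The 2-modular successive rank vector. -/
def mranks (L : List ℕ) : List ℤ := (List.range (mdurfee L)).map (mrank L)

/-- A minimal basis partition in `P_{o,d}`: the partitioned number is minimal among all
partitions with non-repeating odd parts having the same 2-modular successive rank vector. -/
def MinBasis {n : ℕ} (μ : n.Partition) : Prop :=
  Pod μ ∧ ∀ (m : ℕ) (μ' : m.Partition), Pod μ' →
    mranks (sparts μ') = mranks (sparts μ) → n ≤ m

/-- A basis partition in `P_{o,d}`: no row of the 2-modular graph strictly below the Durfee
square has size equal to the size of a column strictly to the right of the Durfee square. -/
def PodBasis {n : ℕ} (π : n.Partition) : Prop :=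
  Pod π ∧ ∀ i, mdurfee (sparts π) ≤ i → i < (sparts π).length →
    ∀ c, mdurfee (sparts π) < c → mcolSize (sparts π) c ≠ (sparts π).getD i 0

/-- The signature of a basis partition in `P_{o,d}`: the number of distinct sizes among the
rows of the 2-modular graph strictly below the Durfee square. -/
def msig (L : List ℕ) : ℕ := ((L.drop (mdurfee L)).dedup).length

/-- The ℓ-signature: the number of distinct lengths among the rows of the 2-modular
graph strictly below the Durfee square. -/
def lsig (L : List ℕ) : ℕ := (((L.drop (mdurfee L)).map mrowLen).dedup).length

/-- `b(n;j)` for `P_{o,d}`: the number of basis partitions of `n` in `P_{o,d}` with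
signature `j`. -/
noncomputable def podB (n j : ℕ) : ℕ := Nat.card {π : n.Partition // PodBasis π ∧ msig (sparts π) = j}

/-- The number of odd parts. -/
def numOdd (L : List ℕ) : ℕ := L.countP (fun x => x % 2 = 1)

/-- A special partition: distinct parts with consecutive differences `≥ 4`, where a
difference equal to `4` is permitted only when both parts are even. -/
def Special (L : List ℕ) : Prop :=
  ∀ i, i + 1 < L.length →
    L.getD (i + 1) 0 + 4 ≤ L.getD i 0 ∧
      (L.getD i 0 = L.getD (i + 1) 0 + 4 → Even (L.getD i 0) ∧ Even (L.getD (i + 1) 0))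

/-- The `i`-th part of a special partition, with the convention that the part just after
the last one is `-2`. -/
def hpart (L : List ℕ) (i : ℕ) : ℤ := if i < L.length then (L.getD i 0 : ℤ) else -2

/-- `ℓ(π)`: the number of gaps `> 4` in a special partition, with the convention
`h_{k+1} = -2`. -/
def ell (L : List ℕ) : ℕ :=
  ((Finset.range L.length).filter (fun i => 4 < hpart L i - hpart L (i + 1))).card



/-!
Let `k` be the Durfee size, `F_i = b_i - k` the rows to the right of the Durfee square and
`G_i` the columns below it (`1 ≤ i ≤ k`, `F_{k+1} = G_{k+1} = 0`). Both are nonincreasing and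
`r_i = F_i - G_i`, while Abel summation gives `n = k² + ∑ i (ΔF_i + ΔG_i)` with
`ΔF_i = F_i - F_{i+1} ≥ 0`, `ΔG_i = G_i - G_{i+1} ≥ 0`. Hence `n ≥ k² + ∑ i |r_i - r_{i+1}|`,
a bound depending only on the ranks, with equality iff no `i` has both `ΔF_i > 0` and
`ΔG_i > 0`, i.e. iff `i` is never both a part of `π_r` and a part of `π_b`. Conversely, if `j`
is such a common part, deleting one cell from each of the first `j` rows and the part `j`
from `π_b` lowers every `F_i` and `G_i` with `i ≤ j` by one, so it keeps the ranks and
lowers `n` by `2j`.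
-/

section SortedList

variable {L : List ℕ}

theorem getD_antitone (hL : L.Pairwise (· ≥ ·)) {s t : ℕ} (hst : s ≤ t) :
    L.getD t 0 ≤ L.getD s 0 := by
  rcases hst.eq_or_lt with rfl | hst
  · rfl
  by_cases ht : t < L.length
  · rw [List.getD_eq_getElem _ _ ht, List.getD_eq_getElem _ _ (hst.trans ht)]
    exact hL.rel_get_of_lt (a := ⟨s, hst.trans ht⟩) (b := ⟨t, ht⟩) hst
  · rw [List.getD_eq_default _ _ (not_lt.mp ht)]; exact Nat.zero_le _

theorem le_getD_of_mem_drop (hL : L.Pairwise (· ≥ ·)) {k x : ℕ} (hx : x ∈ L.drop k) :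
    x ≤ L.getD k 0 := by
  obtain ⟨t, ht, rfl⟩ := List.mem_iff_getElem.mp hx
  rw [List.getElem_drop, ← List.getD_eq_getElem _ 0]
  exact getD_antitone hL (Nat.le_add_right k t)

theorem getD_le_of_forall_le {l : List ℕ} {b : ℕ} (h : ∀ x ∈ l, x ≤ b) (i : ℕ) :
    l.getD i 0 ≤ b := by
  by_cases hi : i < l.length
  · rw [List.getD_eq_getElem _ _ hi]
    exact h _ (List.getElem_mem hi)
  · rw [List.getD_eq_default _ _ (not_lt.mp hi)]; exact Nat.zero_le _

theorem lt_conj_iff (hL : L.Pairwise (· ≥ ·)) {c : ℕ} (hc : 0 < c) (j : ℕ) :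
    j < conj L c ↔ c ≤ L.getD j 0 := by
  induction L generalizing j with
  | nil => simp only [conj, List.countP_nil, List.getD_nil]; omega
  | cons x t ih =>
    have hconj : conj (x :: t) c = conj t c + if c ≤ x then 1 else 0 := by
      simp [conj, List.countP_cons]
    by_cases hcx : c ≤ x
    · cases j with
      | zero => simp [hconj, hcx]
      | succ j => simp [hconj, hcx, ih hL.of_cons]
    · have ht : conj t c = 0 := List.countP_eq_zero.mpr fun y hy => by
        simpa using ((List.pairwise_cons.mp hL).1 y hy).trans_lt (not_le.mp hcx)
      have hget := getD_antitone hL (Nat.zero_le j)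
      simp only [List.getD_cons_zero] at hget
      cases j <;> simp_all

theorem lt_durfee_iff (hL : L.Pairwise (· ≥ ·)) {i : ℕ} :
    i < durfee L ↔ i + 1 ≤ L.getD i 0 := by
  set p : ℕ → Prop := fun i => i + 1 ≤ L.getD i 0
  have hdurfee : durfee L = Nat.count p L.length := rfl
  have hdown : ∀ {i j}, i ≤ j → p j → p i := fun hij hj => by
    have := getD_antitone hL hij; simp only [p] at *; omega
  rw [hdurfee]
  constructor
  · intro hi
    by_contra hpi
    have : Nat.count p L.length ≤ i := by
      rcases le_or_gt L.length i with h | h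
      · exact (Nat.count_le _).trans h
      · obtain ⟨m, hm⟩ := Nat.exists_eq_add_of_le h.le
        rw [hm, Nat.count_add, (Nat.count_iff_forall_not (p := fun k => p (i + k))).mpr
          fun m _ h' => hpi (hdown (Nat.le_add_right i m) h')]
        exact Nat.count_le _
    omega
  · intro hpi
    have hlen : i + 1 ≤ L.length := by
      by_contra h
      simp only [List.getD_eq_default _ _ (by omega : L.length ≤ i)] at hpi
      omega
    calc i < i + 1 := i.lt_succ_self
      _ = Nat.count p (i + 1) :=
        (Nat.count_iff_forall.mpr fun j hj => hdown (by omega) hpi).symm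
      _ ≤ Nat.count p L.length := Nat.count_monotone _ hlen

theorem durfee_eq_of_le_getD (hL : L.Pairwise (· ≥ ·)) {k : ℕ} (hlt : ∀ i < k, i + 1 ≤ L.getD i 0)
    (hk : L.getD k 0 ≤ k) : durfee L = k := by
  have h1 : ¬ k < durfee L := fun h => by have := (lt_durfee_iff hL).mp h; omega
  have h2 : ¬ durfee L < k := fun h => by
    have := (lt_durfee_iff hL).mpr (hlt _ h); omega
  omega

theorem durfee_le_getD (hL : L.Pairwise (· ≥ ·)) {i : ℕ} (hi : i < durfee L) :
    durfee L ≤ L.getD i 0 := by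
  have h1 := (lt_durfee_iff hL).mp (Nat.sub_one_lt_of_lt hi)
  have h2 := getD_antitone hL (Nat.le_sub_one_of_lt hi)
  omega

theorem getD_le_durfee (hL : L.Pairwise (· ≥ ·)) {i : ℕ} (hi : durfee L ≤ i) :
    L.getD i 0 ≤ durfee L := by
  have h1 := mt (lt_durfee_iff hL).mpr (lt_irrefl (durfee L))
  have h2 := getD_antitone hL hi
  omega

theorem le_durfee_of_mem_drop (hL : L.Pairwise (· ≥ ·)) {x : ℕ}
    (hx : x ∈ L.drop (durfee L)) : x ≤ durfee L :=
  (le_getD_of_mem_drop hL hx).trans (getD_le_durfee hL le_rfl)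

end SortedList

section DurfeeDecomposition

variable {L : List ℕ}

theorem durfee_le_length (L : List ℕ) : durfee L ≤ L.length :=
  List.countP_le_length.trans (List.length_range ..).le

theorem durfee_le_of_mem_take (hL : L.Pairwise (· ≥ ·)) {x : ℕ}
    (hx : x ∈ L.take (durfee L)) : durfee L ≤ x := by
  obtain ⟨s, hs, rfl⟩ := List.mem_iff_getElem.mp hx
  rw [List.getElem_take, ← List.getD_eq_getElem _ 0]
  exact durfee_le_getD hL (by simp at hs; omega)

/-- Row `i + 1` of the Ferrers graph to the right of the Durfee square (a part of the conjugate
of `π_r`). -/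
def rightRow (L : List ℕ) (i : ℕ) : ℕ := L.getD i 0 - durfee L

/-- Column `i + 1` of the Ferrers graph below the Durfee square (a part of the conjugate
of `π_b`). -/
def belowCol (L : List ℕ) (i : ℕ) : ℕ := (L.drop (durfee L)).countP (i + 1 ≤ ·)

theorem rightRow_succ_le (hL : L.Pairwise (· ≥ ·)) (i : ℕ) :
    rightRow L (i + 1) ≤ rightRow L i :=
  Nat.sub_le_sub_right (getD_antitone hL i.le_succ) _

theorem belowCol_succ_le (L : List ℕ) (i : ℕ) : belowCol L (i + 1) ≤ belowCol L i :=
  List.countP_mono_left fun x _ hx => by simp only [decide_eq_true_eq] at *; omega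

theorem rightRow_eq_zero (hL : L.Pairwise (· ≥ ·)) {i : ℕ} (hi : durfee L ≤ i) :
    rightRow L i = 0 :=
  Nat.sub_eq_zero_of_le (getD_le_durfee hL hi)

theorem belowCol_eq_zero (hL : L.Pairwise (· ≥ ·)) {i : ℕ} (hi : durfee L ≤ i) :
    belowCol L i = 0 :=
  List.countP_eq_zero.mpr fun x hx => by
    have := le_durfee_of_mem_drop hL hx
    simp only [decide_eq_true_eq]
    omega

theorem conj_eq_durfee_add_belowCol (hL : L.Pairwise (· ≥ ·)) {i : ℕ} (hi : i < durfee L) :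
    conj L (i + 1) = durfee L + belowCol L i := by
  have htake : (L.take (durfee L)).countP (i + 1 ≤ ·) = durfee L := by
    rw [List.countP_eq_length.mpr, List.length_take, min_eq_left (durfee_le_length L)]
    intro x hx
    have := durfee_le_of_mem_take hL hx
    simp only [decide_eq_true_eq]
    omega
  rw [conj, ← List.take_append_drop (durfee L) L, List.countP_append, List.take_append_drop,
    htake, belowCol]

theorem rank_eq_rightRow_sub_belowCol (hL : L.Pairwise (· ≥ ·)) {i : ℕ} (hi : i < durfee L) :
    rank L i = rightRow L i - belowCol L i := by
  rw [rank, conj_eq_durfee_add_belowCol hL hi, rightRow, Nat.cast_sub (durfee_le_getD hL hi)]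
  push_cast
  ring

theorem length_ranks (L : List ℕ) : (ranks L).length = durfee L := by
  simp [ranks]

theorem getD_ranks (hL : L.Pairwise (· ≥ ·)) (i : ℕ) :
    (ranks L).getD i 0 = rightRow L i - belowCol L i := by
  by_cases hi : i < durfee L
  · rw [List.getD_eq_getElem _ _ (by rwa [length_ranks])]
    simp only [ranks, List.getElem_map, List.getElem_range]
    exact rank_eq_rightRow_sub_belowCol hL hi
  · rw [List.getD_eq_default _ _ (by rw [length_ranks]; omega),
      rightRow_eq_zero hL (not_lt.mp hi), belowCol_eq_zero hL (not_lt.mp hi)]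
    simp

theorem sum_take_eq_sum_getD (L : List ℕ) (k : ℕ) :
    (L.take k).sum = ∑ i ∈ range k, L.getD i 0 := by
  induction k with
  | zero => simp
  | succ k ih =>
    rw [List.take_add_one, List.sum_append, ih, sum_range_succ, List.getD_eq_getElem?_getD]
    cases L[k]? <;> simp

theorem sum_eq_sum_countP {l : List ℕ} {k : ℕ} (h : ∀ x ∈ l, x ≤ k) :
    l.sum = ∑ i ∈ range k, l.countP (i + 1 ≤ ·) := by
  induction l with
  | nil => simp
  | cons x t ih =>
    simp only [List.forall_mem_cons] at h
    simp only [List.sum_cons, List.countP_cons, sum_add_distrib, ← ih h.2, decide_eq_true_eq]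
    rw [sum_boole, add_comm, Nat.cast_id]
    have hfilter : {i ∈ range k | i + 1 ≤ x} = range x := by
      ext i
      simp only [mem_filter, mem_range]
      omega
    rw [hfilter, card_range]

theorem sum_eq_durfee_sq_add (hL : L.Pairwise (· ≥ ·)) :
    L.sum = durfee L ^ 2 + ∑ i ∈ range (durfee L), (rightRow L i + belowCol L i) := by
  have hrows : ∑ i ∈ range (durfee L), L.getD i 0 =
      ∑ i ∈ range (durfee L), (durfee L + rightRow L i) :=
    sum_congr rfl fun i hi => by
      have := durfee_le_getD hL (mem_range.mp hi)
      rw [rightRow]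
      omega
  rw [← List.sum_take_add_sum_drop L (durfee L), sum_take_eq_sum_getD, hrows,
    sum_eq_sum_countP fun x hx => le_durfee_of_mem_drop hL hx, sum_add_distrib, sum_add_distrib,
    sum_const, card_range]
  simp only [belowCol, smul_eq_mul]
  ring

theorem sum_range_eq_sum_mul_sub_add (H : ℕ → ℤ) (k : ℕ) :
    ∑ i ∈ range k, H i = ∑ i ∈ range k, (i + 1) * (H i - H (i + 1)) + k * H k := by
  induction k with
  | zero => simp
  | succ k ih =>
    rw [sum_range_succ, sum_range_succ (fun i : ℕ => ((i : ℤ) + 1) * (H i - H (i + 1))), ih]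
    push_cast
    ring

theorem sum_eq_durfee_sq_add_sum_mul_sub (hL : L.Pairwise (· ≥ ·)) :
    (L.sum : ℤ) = durfee L ^ 2 + ∑ i ∈ range (durfee L), (i + 1) *
      ((rightRow L i - rightRow L (i + 1) : ℤ) + (belowCol L i - belowCol L (i + 1))) := by
  rw [sum_eq_durfee_sq_add hL]
  push_cast
  rw [sum_range_eq_sum_mul_sub_add, rightRow_eq_zero hL le_rfl, belowCol_eq_zero hL le_rfl]
  simp only [CharP.cast_eq_zero, add_zero, mul_zero]
  congr 1
  exact sum_congr rfl fun i _ => by ring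

end DurfeeDecomposition

section SizeBound

variable {L : List ℕ}

theorem exists_conj_eq_of_rightRow_lt (hL : L.Pairwise (· ≥ ·)) {i : ℕ}
    (h : rightRow L (i + 1) < rightRow L i) : ∃ c, durfee L < c ∧ conj L c = i + 1 := by
  set c := max (L.getD (i + 1) 0) (durfee L) + 1
  have hc : 0 < c := Nat.succ_pos _
  have h1 := (lt_conj_iff hL hc i).mpr (by simp only [rightRow, c] at h ⊢; omega)
  have h2 := mt (lt_conj_iff hL hc (i + 1)).mp (by omega)
  exact ⟨c, by omega, by omega⟩

theorem mem_drop_durfee_of_belowCol_lt {i : ℕ} (h : belowCol L (i + 1) < belowCol L i) :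
    i + 1 ∈ L.drop (durfee L) := by
  by_contra hmem
  refine h.ne (List.countP_congr fun x hx => ?_)
  have : x ≠ i + 1 := fun hx' => hmem (hx' ▸ hx)
  simp only [decide_eq_true_eq]
  omega

def sizeBound (R : List ℤ) : ℤ :=
  R.length ^ 2 + ∑ i ∈ range R.length, (i + 1) * |R.getD i 0 - R.getD (i + 1) 0|

theorem sizeBound_ranks_le_sum (hL : L.Pairwise (· ≥ ·)) : sizeBound (ranks L) ≤ L.sum := by
  rw [sum_eq_durfee_sq_add_sum_mul_sub hL, sizeBound, length_ranks]
  gcongr with i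
  rw [getD_ranks hL, getD_ranks hL, abs_le]
  have := rightRow_succ_le hL i
  have := belowCol_succ_le L i
  constructor <;> omega

theorem sum_eq_sizeBound_ranks (hL : L.Pairwise (· ≥ ·))
    (hdisj : ∀ c, durfee L < c → conj L c ∉ L.drop (durfee L)) :
    (L.sum : ℤ) = sizeBound (ranks L) := by
  rw [sum_eq_durfee_sq_add_sum_mul_sub hL, sizeBound, length_ranks]
  congr 1
  refine sum_congr rfl fun i _ => ?_
  rw [getD_ranks hL, getD_ranks hL]
  have hF := rightRow_succ_le hL i
  have hG := belowCol_succ_le L i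
  have : rightRow L (i + 1) = rightRow L i ∨ belowCol L (i + 1) = belowCol L i := by
    by_contra! h
    obtain ⟨c, hc, hci⟩ := exists_conj_eq_of_rightRow_lt hL (lt_of_le_of_ne hF h.1)
    exact hdisj c hc (hci ▸ mem_drop_durfee_of_belowCol_lt (lt_of_le_of_ne hG h.2))
  rcases this with h | h <;> rw [h]
  · rw [abs_of_nonpos (by omega)]
    ring
  · rw [abs_of_nonneg (by omega)]
    ring

end SizeBound

section RemoveStrip

variable {L : List ℕ}

def removeStrip (L : List ℕ) (j : ℕ) : List ℕ :=
  (List.range (durfee L)).map (fun i => L.getD i 0 - if i < j then 1 else 0) ++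
    (L.drop (durfee L)).erase j

theorem getD_removeStrip {i : ℕ} (j : ℕ) (hi : i < durfee L) :
    (removeStrip L j).getD i 0 = L.getD i 0 - if i < j then 1 else 0 := by
  rw [removeStrip, List.getD_append _ _ _ _ (by simpa)]
  simp [hi]

theorem drop_durfee_removeStrip (L : List ℕ) (j : ℕ) :
    (removeStrip L j).drop (durfee L) = (L.drop (durfee L)).erase j :=
  List.drop_left' (by simp)

theorem conj_le_durfee (hL : L.Pairwise (· ≥ ·)) {c : ℕ} (hc : durfee L < c) :
    conj L c ≤ durfee L := by
  by_contra! h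
  have := (lt_conj_iff hL (c := c) (by omega) _).mp h
  have := getD_le_durfee hL le_rfl
  omega

theorem removeStrip_pairwise (hL : L.Pairwise (· ≥ ·)) {c : ℕ} (hc : durfee L < c) :
    (removeStrip L (conj L c)).Pairwise (· ≥ ·) := by
  have hrow := lt_conj_iff hL (c := c) (by omega)
  rw [removeStrip, List.pairwise_append, List.pairwise_map]
  refine ⟨List.pairwise_lt_range.imp_of_mem fun {a b} _ hb hab => ?_,
    hL.sublist (List.erase_sublist.trans (List.drop_sublist _ _)), fun a ha b hb => ?_⟩
  · have := getD_antitone hL hab.le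
    have := hrow a
    have := hrow b
    split_ifs <;> omega
  · obtain ⟨i, hi, rfl⟩ := List.mem_map.mp ha
    have := le_durfee_of_mem_drop hL (List.mem_of_mem_erase hb)
    have := durfee_le_getD hL (List.mem_range.mp hi)
    have := hrow i
    split_ifs <;> omega

theorem durfee_removeStrip (hL : L.Pairwise (· ≥ ·)) {c : ℕ} (hc : durfee L < c) :
    durfee (removeStrip L (conj L c)) = durfee L := by
  refine durfee_eq_of_le_getD (removeStrip_pairwise hL hc) (fun i hi => ?_) ?_
  · rw [getD_removeStrip _ hi]
    have := durfee_le_getD hL hi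
    have := (lt_conj_iff hL (c := c) (by omega) i)
    split_ifs <;> omega
  · rw [removeStrip, List.getD_append_right _ _ _ _ (by simp)]
    exact getD_le_of_forall_le
      (fun x hx => le_durfee_of_mem_drop hL (List.mem_of_mem_erase hx)) _

theorem rightRow_removeStrip (hL : L.Pairwise (· ≥ ·)) {c : ℕ} (hc : durfee L < c) {i : ℕ}
    (hi : i < durfee L) :
    rightRow (removeStrip L (conj L c)) i + (if i < conj L c then 1 else 0) = rightRow L i := by
  rw [rightRow, rightRow, durfee_removeStrip hL hc, getD_removeStrip _ hi]
  have := durfee_le_getD hL hi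
  have := (lt_conj_iff hL (c := c) (by omega) i)
  split_ifs <;> omega

theorem belowCol_removeStrip (hL : L.Pairwise (· ≥ ·)) {c : ℕ} (hc : durfee L < c)
    (hmem : conj L c ∈ L.drop (durfee L)) (i : ℕ) :
    belowCol (removeStrip L (conj L c)) i + (if i < conj L c then 1 else 0) = belowCol L i := by
  rw [belowCol, belowCol, durfee_removeStrip hL hc, drop_durfee_removeStrip, List.countP_erase]
  simp only [hmem, decide_eq_true_eq, true_and]
  split_ifs with h h' <;> try omega
  have := (List.countP_pos_iff (p := (i + 1 ≤ ·))).mpr ⟨_, hmem, by simpa using h⟩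
  omega

theorem exists_smaller_of_conj_mem_drop (hL : L.Pairwise (· ≥ ·)) (hpos : ∀ x ∈ L, 0 < x)
    {c : ℕ} (hc : durfee L < c) (hmem : conj L c ∈ L.drop (durfee L)) :
    ∃ L' : List ℕ, L'.Pairwise (· ≥ ·) ∧ (∀ x ∈ L', 0 < x) ∧ ranks L' = ranks L ∧
      L'.sum < L.sum := by
  have hL' := removeStrip_pairwise hL hc
  have hdurfee := durfee_removeStrip hL hc
  have hj := hpos _ (List.mem_of_mem_drop hmem)
  have hjk := conj_le_durfee hL hc
  refine ⟨removeStrip L (conj L c), hL', fun x hx => ?_, ?_, ?_⟩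
  · rcases List.mem_append.mp hx with hx | hx
    · obtain ⟨i, hi, rfl⟩ := List.mem_map.mp hx
      have := durfee_le_getD hL (List.mem_range.mp hi)
      have := (lt_conj_iff hL (c := c) (by omega) i)
      split_ifs <;> omega
    · exact hpos x (List.mem_of_mem_drop (List.mem_of_mem_erase hx))
  · rw [ranks, ranks, hdurfee]
    refine List.map_congr_left fun i hi => ?_
    have hi := List.mem_range.mp hi
    rw [rank_eq_rightRow_sub_belowCol hL' (hdurfee ▸ hi), rank_eq_rightRow_sub_belowCol hL hi,
      ← rightRow_removeStrip hL hc hi, ← belowCol_removeStrip hL hc hmem i]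
    push_cast
    ring
  · rw [sum_eq_durfee_sq_add hL', sum_eq_durfee_sq_add hL, hdurfee]
    refine Nat.add_lt_add_left (sum_lt_sum (fun i hi => ?_) ⟨0, mem_range.mpr (by omega), ?_⟩) _
    · have := rightRow_removeStrip hL hc (mem_range.mp hi)
      have := belowCol_removeStrip hL hc hmem i
      omega
    · have := rightRow_removeStrip hL hc (i := 0) (by omega)
      have := belowCol_removeStrip hL hc hmem 0
      simp only [hj, if_true] at *
      omega

end RemoveStrip

section Partitions

theorem sparts_pairwise {n : ℕ} (π : n.Partition) : (sparts π).Pairwise (· ≥ ·) :=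
  Multiset.pairwise_sort _ _

theorem pos_of_mem_sparts {n : ℕ} (π : n.Partition) {x : ℕ} (hx : x ∈ sparts π) : 0 < x :=
  π.parts_pos ((Multiset.mem_sort _).mp hx)

theorem sum_sparts {n : ℕ} (π : n.Partition) : (sparts π).sum = n := by
  rw [← Multiset.sum_coe, sparts, Multiset.sort_eq, π.parts_sum]

theorem exists_sparts_eq {L : List ℕ} (hL : L.Pairwise (· ≥ ·)) (hpos : ∀ x ∈ L, 0 < x) :
    ∃ π : L.sum.Partition, sparts π = L :=
  ⟨⟨L, fun hx => hpos _ (Multiset.mem_coe.mp hx), Multiset.sum_coe L⟩,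
    List.Perm.eq_of_pairwise' (sparts_pairwise _) hL
      (Multiset.coe_eq_coe.mp (Multiset.sort_eq _ _))⟩

end Partitions

theorem statement0 {n : ℕ} (π : n.Partition) :
    IsBasis π ↔
      ∀ c : ℕ, durfee (sparts π) < c →
        conj (sparts π) c ∉ (sparts π).drop (durfee (sparts π)) := by
  constructor
  · intro hbasis c hc hmem
    obtain ⟨L, hL, hpos, hranks, hsum⟩ := exists_smaller_of_conj_mem_drop (sparts_pairwise π)
      (fun _ => pos_of_mem_sparts π) hc hmem
    obtain ⟨π', hπ'⟩ := exists_sparts_eq hL hpos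
    have := hbasis _ π' (by rw [hπ', hranks])
    rw [sum_sparts] at hsum
    omega
  · intro hdisj m π' hranks
    have hle := sizeBound_ranks_le_sum (sparts_pairwise π')
    rw [hranks, ← sum_eq_sizeBound_ranks (sparts_pairwise π) hdisj, sum_sparts,
      sum_sparts] at hle
    exact_mod_cast hle

end BasisPartitions
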